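/- Let L ≥ 1, let δ : ℝ≥0 → ℝ≥0 be monotone nondecreasing, and let ε ≥ 0. For i = 1, …, L let F_i, G_i : ℝ^{d_{i−1}} → ℝ^{d_i} be maps such that (a) ‖F_i(x) − F_i(u)‖₁ ≤ δ(‖x − u‖₁) for all x, u ∈ ℝ^{d_{i−1}}, and (b) ‖G_i(x) − F_i(x)‖₁ ≤ ε for all x ∈ ℝ^{d_{i−1}}. Define e₁ = ε and e_{k+1} = ε + δ(e_k). Then for every x ∈ ℝ^{d₀}, ‖(G_L ∘ ⋯ ∘ G₁)(x) − (F_L ∘ ⋯ ∘ F₁)(x)‖₁ ≤ e_L. -/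
import Mathlib


/-- Composition chain `x_i = (F_{i-1} ∘ ⋯ ∘ F_0)(x)`. -/
def compChain (d : ℕ → ℕ)
    (F : (i : ℕ) → (Fin (d i) → ℝ) → (Fin (d (i + 1)) → ℝ))
    (x : Fin (d 0) → ℝ) : (i : ℕ) → Fin (d i) → ℝ
  | 0 => x
  | (i + 1) => F i (compChain d F x i)

/-- The ℓ¹ norm on `ℝ^n`. -/
def l1norm {n : ℕ} (v : Fin n → ℝ) : ℝ := ∑ j, |v j|

/-- The accumulated error sequence: `e 1 = ε`, `e (k+1) = ε + δ (e k)`. -/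
noncomputable def eSeq (δ : ℝ → ℝ) (ε : ℝ) : ℕ → ℝ
  | 0 => 0
  | 1 => ε
  | (k + 2) => ε + δ (eSeq δ ε (k + 1))


lemma l1norm_nonneg {n : ℕ} (v : Fin n → ℝ) : 0 ≤ l1norm v :=
  Finset.sum_nonneg fun j _ => abs_nonneg _

lemma l1norm_triangle {n : ℕ} (a b c : Fin n → ℝ) :
    l1norm (fun j => a j - c j) ≤ l1norm (fun j => a j - b j) + l1norm (fun j => b j - c j) := by
  unfold l1norm
  rw [← Finset.sum_add_distrib]
  refine Finset.sum_le_sum fun j _ => ?_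
  simp only []
  have : a j - c j = (a j - b j) + (b j - c j) := by ring
  rw [this]; exact abs_add_le _ _

lemma eSeq_nonneg (δ : ℝ → ℝ) (hδnn : ∀ a : ℝ, 0 ≤ a → 0 ≤ δ a)
    (ε : ℝ) (hε : 0 ≤ ε) : ∀ k, 0 ≤ eSeq δ ε k
  | 0 => le_refl 0
  | 1 => hε
  | (k + 2) => add_nonneg hε (hδnn _ (eSeq_nonneg δ hδnn ε hε (k + 1)))

theorem stmt_17 (L : ℕ) (hL : 1 ≤ L) (d : ℕ → ℕ)
    (δ : ℝ → ℝ)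
    (hδnn : ∀ a : ℝ, 0 ≤ a → 0 ≤ δ a)
    (hδmono : ∀ a b : ℝ, 0 ≤ a → a ≤ b → δ a ≤ δ b)
    (ε : ℝ) (hε : 0 ≤ ε)
    (F G : (i : ℕ) → (Fin (d i) → ℝ) → (Fin (d (i + 1)) → ℝ))
    (hF : ∀ i < L, ∀ x u : Fin (d i) → ℝ,
      l1norm (fun j => F i x j - F i u j) ≤ δ (l1norm fun j => x j - u j))
    (hG : ∀ i < L, ∀ x : Fin (d i) → ℝ,
      l1norm (fun j => G i x j - F i x j) ≤ ε)
    (x : Fin (d 0) → ℝ) :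
    l1norm (fun j => compChain d G x L j - compChain d F x L j) ≤ eSeq δ ε L := by
  have key : ∀ k, k ≤ L →
      l1norm (fun j => compChain d G x k j - compChain d F x k j) ≤ eSeq δ ε k := by
    intro k
    induction k with
    | zero =>
      intro _
      simp [compChain, eSeq, l1norm]
    | succ k ih =>
      intro hkL
      have hk : k < L := hkL
      cases k with
      | zero =>
        have h := hG 0 hk x
        simpa [compChain, eSeq] using h
      | succ m =>
        have ihk := ih (le_of_lt hk)
        set yG := compChain d G x (m + 1)
        set yF := compChain d F x (m + 1)
        have tri := l1norm_triangle (G (m+1) yG) (F (m+1) yG) (F (m+1) yF)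
        have h1 := hG (m+1) hk yG
        have h2 := hF (m+1) hk yG yF
        have h3 : δ (l1norm fun j => yG j - yF j) ≤ δ (eSeq δ ε (m+1)) :=
          hδmono _ _ (l1norm_nonneg _) ihk
        calc l1norm (fun j => compChain d G x (m+2) j - compChain d F x (m+2) j)
            ≤ _ + _ := tri
          _ ≤ ε + δ (eSeq δ ε (m+1)) := add_le_add h1 (le_trans h2 h3)
          _ = eSeq δ ε (m + 2) := rfl
  exact key L le_rfl
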